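/- arXiv:1310.3514 — 2 statements merged into one kernel-verified Lean document; each statement's English description precedes it below -/
import Mathlib

section
/- Let λ < 0 and h > 0. For b⁻ ≤ b⁺ reals and a differentiable function a with λ(a - b⁻) ≤ a' ≤ λ(a - b⁺) componentwise interval sense, define g^± = (a(0)^± - b^±)e^{λh} + b^±. Then a(h) ∈ [g⁻, g⁺] and moreover [a(0)⁻, a(0)⁺] ∪ [g⁻, g⁺] contains a(t) for all t ∈ [0, h] (monotonicity of bounds: the trajectory over [0,h] is contained in the union of the initial interval and the linear-approximation interval). -/
/-!
Multiplying by the integrating factor `exp (-l t)` turns the differential inequalities into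
monotonicity statements, so `a t` lies between `(a 0 - b⁻) e^{lt} + b⁻` and
`(a 0 - b⁺) e^{lt} + b⁺`. For `l < 0` and `0 ≤ t ≤ h` the weight `e^{lt}` lies in `[e^{lh}, 1]`,
so each bound is a convex combination of its values at `t = 0` and `t = h`.
-/

open Set Real

theorem sub_mul_exp_le_of_le_deriv {l h c : ℝ} {a a' : ℝ → ℝ}
    (hderiv : ∀ t ∈ Icc 0 h, HasDerivAt a (a' t) t)
    (hge : ∀ t ∈ Icc 0 h, l * (a t - c) ≤ a' t) :
    ∀ t ∈ Icc 0 h, (a 0 - c) * exp (l * t) ≤ a t - c := by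
  set f : ℝ → ℝ := fun t => (a t - c) * exp (-(l * t))
  have hf : ∀ t ∈ Icc 0 h, HasDerivAt f ((a' t - l * (a t - c)) * exp (-(l * t))) t := by
    intro t ht
    have hexp : HasDerivAt (fun t => exp (-(l * t))) (exp (-(l * t)) * -l) t := by
      simpa using ((hasDerivAt_id t).const_mul l).neg.exp
    exact ((hderiv t ht).sub_const c |>.mul hexp).congr_deriv (by ring)
  have hmono : MonotoneOn f (Icc 0 h) := by
    refine monotoneOn_of_hasDerivWithinAt_nonneg (convex_Icc 0 h)
      (fun t ht => (hf t ht).continuousAt.continuousWithinAt)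
      (fun t ht => (hf t (interior_subset ht)).hasDerivWithinAt) fun t ht => ?_
    have := hge t (interior_subset ht)
    exact mul_nonneg (by linarith) (exp_pos _).le
  intro t ht
  have hft : f 0 ≤ f t := hmono (left_mem_Icc.2 (ht.1.trans ht.2)) ht ht.1
  have hexp : exp (-(l * t)) * exp (l * t) = 1 := by rw [← exp_add, neg_add_cancel, exp_zero]
  calc (a 0 - c) * exp (l * t) = f 0 * exp (l * t) := by simp [f]
    _ ≤ f t * exp (l * t) := by gcongr
    _ = a t - c := by rw [mul_assoc, hexp, mul_one]

theorem sub_le_mul_exp_of_deriv_le {l h c : ℝ} {a a' : ℝ → ℝ}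
    (hderiv : ∀ t ∈ Icc 0 h, HasDerivAt a (a' t) t)
    (hle : ∀ t ∈ Icc 0 h, a' t ≤ l * (a t - c)) :
    ∀ t ∈ Icc 0 h, a t - c ≤ (a 0 - c) * exp (l * t) := by
  intro t ht
  have := sub_mul_exp_le_of_le_deriv (l := l) (c := -c) (a := fun t => -a t) (a' := fun t => -a' t)
    (fun t ht => (hderiv t ht).neg) (fun t ht => by linarith [hle t ht]) t ht
  linarith

theorem sub_mul_exp_add_mem_uIcc {l h t : ℝ} (hl : l < 0) (ht : t ∈ Icc 0 h) (x c : ℝ) :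
    (x - c) * exp (l * t) + c ∈ uIcc x ((x - c) * exp (l * h) + c) := by
  have hle_one : exp (l * t) ≤ 1 := exp_le_one_iff.2 (mul_nonpos_of_nonpos_of_nonneg hl.le ht.1)
  have hge : exp (l * h) ≤ exp (l * t) := exp_le_exp.2 (mul_le_mul_of_nonpos_left ht.2 hl.le)
  rw [mem_uIcc]
  rcases le_total x c with hxc | hxc
  · left; constructor <;> nlinarith
  · right; constructor <;> nlinarith

theorem stmt_15_general (l h bm bp a0m a0p : ℝ) (hl : l < 0) (hh : 0 < h)
    (a a' : ℝ → ℝ) (hderiv : ∀ t ∈ Set.Icc (0 : ℝ) h, HasDerivAt a (a' t) t)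
    (hlb : ∀ t ∈ Set.Icc (0 : ℝ) h, l * (a t - bm) ≤ a' t)
    (hub : ∀ t ∈ Set.Icc (0 : ℝ) h, a' t ≤ l * (a t - bp))
    (hinit : a 0 ∈ Set.Icc a0m a0p) :
    a h ∈ Set.Icc ((a0m - bm) * Real.exp (l * h) + bm)
                  ((a0p - bp) * Real.exp (l * h) + bp) ∧
    ∀ t ∈ Set.Icc (0 : ℝ) h,
      a t ∈ Set.Icc (min a0m ((a0m - bm) * Real.exp (l * h) + bm))
                    (max a0p ((a0p - bp) * Real.exp (l * h) + bp)) := by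
  have lower : ∀ t ∈ Icc 0 h, (a0m - bm) * exp (l * t) + bm ≤ a t := fun t ht =>
    calc (a0m - bm) * exp (l * t) + bm ≤ (a 0 - bm) * exp (l * t) + bm := by gcongr; exact hinit.1
      _ ≤ a t := by linarith [sub_mul_exp_le_of_le_deriv hderiv hlb t ht]
  have upper : ∀ t ∈ Icc 0 h, a t ≤ (a0p - bp) * exp (l * t) + bp := fun t ht =>
    calc a t ≤ (a 0 - bp) * exp (l * t) + bp := by
          linarith [sub_le_mul_exp_of_deriv_le hderiv hub t ht]
      _ ≤ (a0p - bp) * exp (l * t) + bp := by gcongr; exact hinit.2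
  have hh' : h ∈ Icc 0 h := right_mem_Icc.2 hh.le
  refine ⟨⟨lower h hh', upper h hh'⟩, fun t ht => ⟨?_, ?_⟩⟩
  · exact (sub_mul_exp_add_mem_uIcc hl ht a0m bm).1.trans (lower t ht)
  · exact (upper t ht).trans (sub_mul_exp_add_mem_uIcc hl ht a0p bp).2

theorem stmt_15 (l h bm bp a0m a0p : ℝ) (hl : l < 0) (hh : 0 < h) (hb : bm ≤ bp)
    (ha0 : a0m ≤ a0p)
    (a a' : ℝ → ℝ) (hderiv : ∀ t ∈ Set.Icc (0 : ℝ) h, HasDerivAt a (a' t) t)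
    (hlb : ∀ t ∈ Set.Icc (0 : ℝ) h, l * (a t - bm) ≤ a' t)
    (hub : ∀ t ∈ Set.Icc (0 : ℝ) h, a' t ≤ l * (a t - bp))
    (hinit : a 0 ∈ Set.Icc a0m a0p) :
    a h ∈ Set.Icc ((a0m - bm) * Real.exp (l * h) + bm)
                  ((a0p - bp) * Real.exp (l * h) + bp) ∧
    ∀ t ∈ Set.Icc (0 : ℝ) h,
      a t ∈ Set.Icc (min a0m ((a0m - bm) * Real.exp (l * h) + bm))
                    (max a0p ((a0p - bp) * Real.exp (l * h) + bp)) :=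
  stmt_15_general l h bm bp a0m a0p hl hh a a' hderiv hlb hub hinit
end

section
/- Let Ẽ > 0, α ∈ ℝ, and suppose |a_k| ≤ C₂/|k| for |k| > M and Σ_{k≠0}|a_k|² ≤ Ẽ, a_0 = α. With D₂ = 2^{1/2} + (1/√1)·2⁰ [i.e., D corresponding to s = 1], the nonlinearity satisfies |N_k({a_k})| ≤ C₂√(Ẽ+α²)D₂·|k|^{1/2} for all k ≠ 0; consequently b_k = (N_k+f_k)/(νk²) satisfies |b_k| ≤ C₃/|k|^{3/2} with C₃ = (C₂√(Ẽ+α²)D₂ + max_{0<|k|≤J}|f_k|/|k|^{1/2})/ν. -/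
/-!
Split the convolution `∑ⱼ aⱼ a_{k-j}` at `2|j| = |k|`. For `2|j| ≤ |k|` one has
`|a_{k-j}| ≤ 2C/|k|`, and Cauchy–Schwarz over these at most `2|k|` indices bounds `∑ |aⱼ|` by
`√(2|k|E)`. For `2|j| > |k|`, Cauchy–Schwarz gives `√(C² ∑ 1/j²) · √E`, and telescoping
`1/n² ≤ 1/(n - 1/2) - 1/(n + 1/2)` bounds that tail sum by `4/|k|`. So the convolution is
`O(|k|^{-1/2})`, `N_k` is `O(|k|^{1/2})`, and dividing by `νk²` gives decay of order `3/2`.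
-/

open Finset

-- Mathlib's `sum_Ioo_inv_sq_le` (with `2 / (m + 1)`) is too weak for the constant `√2 + 1`.
lemma sum_Ioc_one_div_sq_le {m N : ℕ} (h : m ≤ N) :
    ∑ n ∈ Ioc m N, 1 / (n : ℝ) ^ 2 ≤ 1 / ((m : ℝ) + 1 / 2) - 1 / ((N : ℝ) + 1 / 2) := by
  induction N, h using Nat.le_induction with
  | base => simp
  | succ N hmN ih =>
    have step : 1 / ((N : ℝ) + 1) ^ 2 ≤ 1 / (N + 1 / 2) - 1 / (N + 1 + 1 / 2) := by
      rw [div_sub_div _ _ (by positivity) (by positivity),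
        div_le_div_iff₀ (by positivity) (by positivity)]
      nlinarith
    rw [sum_Ioc_succ_top (by omega)]
    push_cast
    linarith

lemma sum_one_div_sq_le_of_lt_natAbs {m : ℕ} {t : Finset ℤ} (ht : ∀ x ∈ t, m < x.natAbs) :
    ∑ x ∈ t, 1 / (x : ℝ) ^ 2 ≤ 2 / ((m : ℝ) + 1 / 2) := by
  set N := t.sup Int.natAbs
  have half_le {g : ℕ → ℤ} (hg : ∀ n, (g n : ℝ) ^ 2 = (n : ℝ) ^ 2) :
      ∑ x ∈ (Ioc m N).image g, 1 / (x : ℝ) ^ 2 ≤ 1 / ((m : ℝ) + 1 / 2) := by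
    refine (sum_image_le_of_nonneg fun _ _ => by positivity).trans ?_
    simp only [hg]
    rcases le_or_gt m N with h | h
    · linarith [sum_Ioc_one_div_sq_le h, show 0 ≤ 1 / ((N : ℝ) + 1 / 2) by positivity]
    · simp [Ioc_eq_empty_of_le h.le]; positivity
  set P := (Ioc m N).image ((↑) : ℕ → ℤ)
  set Q := (Ioc m N).image fun n : ℕ => -(n : ℤ)
  have hsub : t ⊆ P ∪ Q := by
    intro x hx
    have := ht x hx
    have := le_sup (f := Int.natAbs) hx
    simp only [P, Q, mem_union, mem_image, mem_Ioc]
    rcases Int.natAbs_eq x with h | h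
    · exact .inl ⟨_, ⟨by omega, by omega⟩, h.symm⟩
    · exact .inr ⟨_, ⟨by omega, by omega⟩, h.symm⟩
  calc ∑ x ∈ t, 1 / (x : ℝ) ^ 2 ≤ ∑ x ∈ P ∪ Q, 1 / (x : ℝ) ^ 2 :=
        sum_le_sum_of_subset_of_nonneg hsub fun _ _ _ => by positivity
    _ ≤ ∑ x ∈ P, 1 / (x : ℝ) ^ 2 + ∑ x ∈ Q, 1 / (x : ℝ) ^ 2 :=
        (le_add_of_nonneg_right (sum_nonneg fun _ _ => by positivity)).trans_eq sum_union_inter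
    _ ≤ 1 / ((m : ℝ) + 1 / 2) + 1 / ((m : ℝ) + 1 / 2) :=
        add_le_add (half_le (by simp)) (half_le (by simp))
    _ = 2 / ((m : ℝ) + 1 / 2) := by ring

lemma sum_mul_sub_le_of_two_mul_abs_le {u : ℤ → ℝ} {C E : ℝ} (hu : ∀ j, 0 ≤ u j)
    (hsum : Summable fun j => u j ^ 2) (hE : ∑' j, u j ^ 2 ≤ E)
    (hdecay : ∀ j ≠ 0, u j ≤ C / |(j : ℝ)|) {k : ℤ} (hk : k ≠ 0) {t : Finset ℤ}
    (ht : ∀ j ∈ t, 2 * |j| ≤ |k|) :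
    ∑ j ∈ t, u j * u (k - j) ≤ 2 * √2 * C * √E / √|(k : ℝ)| := by
  set K := |(k : ℝ)|
  have hK : 0 < K := by positivity
  have hC : 0 ≤ C := by simpa using (hu 1).trans (hdecay 1 one_ne_zero)
  have hshift : ∀ j ∈ t, u (k - j) ≤ 2 * C / K := by
    intro j hj
    have hkj : |k| ≤ 2 * |k - j| := by linarith [ht j hj, abs_sub_abs_le_abs_sub k j]
    have hkj' : K ≤ 2 * |((k - j : ℤ) : ℝ)| := by simp only [K]; exact_mod_cast hkj
    calc u (k - j) ≤ C / |((k - j : ℤ) : ℝ)| := hdecay _ (by rintro h; simp [h] at hkj; omega)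
      _ ≤ 2 * C / K := by
        rw [div_le_div_iff₀ (by linarith) hK]; nlinarith
  have hcard : (#t : ℝ) ≤ 2 * K := by
    have hsub : t ⊆ Icc (-(|k| / 2)) (|k| / 2) := fun j hj =>
      mem_Icc.2 (abs_le.1 (by have := ht j hj; omega))
    have := card_le_card hsub
    rw [Int.card_Icc] at this
    have : (#t : ℤ) ≤ 2 * |k| := by have := abs_pos.2 hk; omega
    simp only [K]; exact_mod_cast this
  have hE' : ∑ j ∈ t, u j ^ 2 ≤ E := (hsum.sum_le_tsum t fun _ _ => sq_nonneg _).trans hE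
  calc ∑ j ∈ t, u j * u (k - j) ≤ ∑ j ∈ t, u j * 1 * (2 * C / K) :=
        sum_le_sum fun j hj => by rw [mul_one]; exact mul_le_mul_of_nonneg_left (hshift j hj) (hu j)
    _ = (∑ j ∈ t, u j * 1) * (2 * C / K) := by rw [sum_mul]
    _ ≤ (√(∑ j ∈ t, u j ^ 2) * √(∑ _j ∈ t, (1 : ℝ) ^ 2)) * (2 * C / K) := by
        gcongr; exact Real.sum_mul_le_sqrt_mul_sqrt _ _ _
    _ ≤ (√E * √(2 * K)) * (2 * C / K) := by
        gcongr; simpa using hcard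
    _ = 2 * √2 * C * √E / √K := by
        rw [Real.sqrt_mul zero_le_two, ← Real.sq_sqrt hK.le]
        field_simp
        rw [Real.sqrt_sq (Real.sqrt_nonneg _)]

lemma sum_mul_sub_le_of_abs_lt_two_mul {u : ℤ → ℝ} {C E : ℝ} (hu : ∀ j, 0 ≤ u j)
    (hsum : Summable fun j => u j ^ 2) (hE : ∑' j, u j ^ 2 ≤ E)
    (hdecay : ∀ j ≠ 0, u j ≤ C / |(j : ℝ)|) {k : ℤ} (hk : k ≠ 0) {t : Finset ℤ}
    (ht : ∀ j ∈ t, |k| < 2 * |j|) :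
    ∑ j ∈ t, u j * u (k - j) ≤ 2 * C * √E / √|(k : ℝ)| := by
  set K := |(k : ℝ)|
  have hK : 0 < K := by positivity
  have hC : 0 ≤ C := by simpa using (hu 1).trans (hdecay 1 one_ne_zero)
  have htail : ∑ j ∈ t, u j ^ 2 ≤ C ^ 2 * (4 / K) := by
    have hm : ∀ j ∈ t, k.natAbs / 2 < j.natAbs := fun j hj => by
      have := ht j hj
      rw [Int.abs_eq_natAbs, Int.abs_eq_natAbs] at this
      omega
    have hKm : K ≤ 2 * ((k.natAbs / 2 : ℕ) : ℝ) + 1 := by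
      rw [show K = (k.natAbs : ℝ) by rw [Nat.cast_natAbs, Int.cast_abs]]
      exact_mod_cast (by omega : k.natAbs ≤ 2 * (k.natAbs / 2) + 1)
    calc ∑ j ∈ t, u j ^ 2 ≤ ∑ j ∈ t, C ^ 2 * (1 / (j : ℝ) ^ 2) := by
          refine sum_le_sum fun j hj => ?_
          have hj : j ≠ 0 := Int.natAbs_ne_zero.1 (by have := hm j hj; omega)
          calc u j ^ 2 ≤ (C / |(j : ℝ)|) ^ 2 := pow_le_pow_left₀ (hu j) (hdecay j hj) 2
            _ = C ^ 2 * (1 / (j : ℝ) ^ 2) := by rw [div_pow, sq_abs]; ring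
      _ = C ^ 2 * ∑ j ∈ t, 1 / (j : ℝ) ^ 2 := (mul_sum _ _ _).symm
      _ ≤ C ^ 2 * (2 / (((k.natAbs / 2 : ℕ) : ℝ) + 1 / 2)) := by
          gcongr; exact sum_one_div_sq_le_of_lt_natAbs hm
      _ ≤ C ^ 2 * (4 / K) := by
          refine mul_le_mul_of_nonneg_left ?_ (sq_nonneg C)
          rw [div_le_div_iff₀ (by positivity) hK]; linarith
  have hshift : ∑ j ∈ t, u (k - j) ^ 2 ≤ E := by
    have := (Equiv.subLeft k).tsum_eq fun j => u j ^ 2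
    exact (((Equiv.subLeft k).summable_iff.2 hsum).sum_le_tsum t fun _ _ => sq_nonneg _).trans
      (this.trans_le hE)
  calc ∑ j ∈ t, u j * u (k - j)
      ≤ √(∑ j ∈ t, u j ^ 2) * √(∑ j ∈ t, u (k - j) ^ 2) := Real.sum_mul_le_sqrt_mul_sqrt _ _ _
    _ ≤ √(C ^ 2 * (4 / K)) * √E := by gcongr
    _ = 2 * C * √E / √K := by
        rw [Real.sqrt_mul (sq_nonneg C), Real.sqrt_sq hC, Real.sqrt_div' _ hK.le,
          show (4 : ℝ) = 2 ^ 2 by norm_num, Real.sqrt_sq zero_le_two]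
        ring

lemma sum_mul_sub_le {u : ℤ → ℝ} {C E : ℝ} (hu : ∀ j, 0 ≤ u j)
    (hsum : Summable fun j => u j ^ 2) (hE : ∑' j, u j ^ 2 ≤ E)
    (hdecay : ∀ j ≠ 0, u j ≤ C / |(j : ℝ)|) {k : ℤ} (hk : k ≠ 0) (t : Finset ℤ) :
    ∑ j ∈ t, u j * u (k - j) ≤ 2 * (C * √E * (√2 + 1)) / √|(k : ℝ)| := by
  rw [← sum_filter_add_sum_filter_not t fun j => 2 * |j| ≤ |k|]
  calc _ ≤ 2 * √2 * C * √E / √|(k : ℝ)| + 2 * C * √E / √|(k : ℝ)| :=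
        add_le_add
          (sum_mul_sub_le_of_two_mul_abs_le hu hsum hE hdecay hk fun j hj => (mem_filter.1 hj).2)
          (sum_mul_sub_le_of_abs_lt_two_mul hu hsum hE hdecay hk fun j hj =>
            not_le.1 (mem_filter.1 hj).2)
    _ = _ := by ring

lemma norm_tsum_mul_sub_le {R : Type*} [SeminormedRing R] {a : ℤ → R} {C E : ℝ}
    (hsum : Summable fun j => ‖a j‖ ^ 2) (hE : ∑' j, ‖a j‖ ^ 2 ≤ E)
    (hdecay : ∀ j ≠ 0, ‖a j‖ ≤ C / |(j : ℝ)|) {k : ℤ} (hk : k ≠ 0) :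
    ‖∑' j, a j * a (k - j)‖ ≤ 2 * (C * √E * (√2 + 1)) / √|(k : ℝ)| := by
  have hfin (t : Finset ℤ) : ∑ j ∈ t, ‖a j * a (k - j)‖ ≤ 2 * (C * √E * (√2 + 1)) / √|(k : ℝ)| :=
    (sum_le_sum fun j _ => norm_mul_le _ _).trans
      (sum_mul_sub_le (fun j => norm_nonneg (a j)) hsum hE hdecay hk t)
  exact (norm_tsum_le_tsum_norm (summable_of_sum_le (fun _ => norm_nonneg _) hfin)).trans
    (Real.tsum_le_of_sum_le (fun _ => norm_nonneg _) hfin)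

lemma norm_neg_I_mul_half_mul_le {S : ℂ} {B : ℝ} {k : ℤ} (hk : k ≠ 0)
    (hS : ‖S‖ ≤ 2 * B / √|(k : ℝ)|) :
    ‖-Complex.I * ((k : ℂ) / 2) * S‖ ≤ B * |(k : ℝ)| ^ ((1 : ℝ) / 2) := by
  have hK : 0 < |(k : ℝ)| := by positivity
  rw [norm_mul, norm_mul, norm_neg, Complex.norm_I, one_mul, norm_div, Complex.norm_intCast,
    Complex.norm_two, ← Real.sqrt_eq_rpow]
  calc |(k : ℝ)| / 2 * ‖S‖ ≤ |(k : ℝ)| / 2 * (2 * B / √|(k : ℝ)|) := by gcongr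
    _ = B * (|(k : ℝ)| / √|(k : ℝ)|) := by ring
    _ = B * √|(k : ℝ)| := by rw [Real.div_sqrt]

lemma norm_div_ofReal_mul_sq_le {x : ℂ} {B ν r : ℝ} (hν : 0 < ν) (hr : r ≠ 0)
    (hx : ‖x‖ ≤ B * √|r|) : ‖x / ((ν * r ^ 2 : ℝ) : ℂ)‖ ≤ (B / ν) / |r| ^ ((3 : ℝ) / 2) := by
  have hR : 0 < |r| := abs_pos.2 hr
  have hpow : √|r| * |r| ^ ((3 : ℝ) / 2) = r ^ 2 := by
    rw [Real.sqrt_eq_rpow, ← Real.rpow_add hR, ← sq_abs]; norm_num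
  rw [norm_div, Complex.norm_real, Real.norm_of_nonneg (by positivity),
    div_le_div_iff₀ (by positivity) (by positivity)]
  calc ‖x‖ * |r| ^ ((3 : ℝ) / 2) ≤ B * √|r| * |r| ^ ((3 : ℝ) / 2) := by gcongr
    _ = B / ν * (ν * r ^ 2) := by rw [mul_assoc, hpow]; field_simp

lemma norm_le_iSup_div_sqrt_mul_sqrt {F : Type*} [SeminormedAddGroup F] (f : ℤ → F) {J : ℤ}
    (hfJ : ∀ k : ℤ, J < |k| → f k = 0) {k : ℤ} (hk : k ≠ 0) :
    ‖f k‖ ≤ (⨆ j : {j : ℤ // j ≠ 0 ∧ |j| ≤ J}, ‖f (j : ℤ)‖ / √|((j : ℤ) : ℝ)|) * √|(k : ℝ)| := by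
  have hK : 0 < √|(k : ℝ)| := by positivity
  rcases lt_or_ge J |k| with hkJ | hkJ
  · rw [hfJ k hkJ, norm_zero]
    exact mul_nonneg (Real.iSup_nonneg fun _ => by positivity) hK.le
  · have : Finite {j : ℤ // j ≠ 0 ∧ |j| ≤ J} :=
      ((Set.finite_Icc (-J) J).subset fun j hj => abs_le.1 hj.2).to_subtype
    rw [← div_le_iff₀ hK]
    exact le_ciSup (f := fun j : {j : ℤ // j ≠ 0 ∧ |j| ≤ J} => ‖f (j : ℤ)‖ / √|((j : ℤ) : ℝ)|)
      (Set.finite_range _).bddAbove ⟨k, hk, hkJ⟩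

lemma Summable.tsum_eq_add_tsum_ne {β : Type*} {f : β → ℝ} (hf : Summable f) (b : β) :
    ∑' x, f x = f b + ∑' x : {x // x ≠ b}, f x := by
  rw [← hf.tsum_subtype_add_tsum_subtype_compl {b}, tsum_singleton]
  rfl

theorem stmt_19_general (ν α Etil C₂ : ℝ) (hν : 0 < ν) (J : ℤ)
    (f a : ℤ → ℂ) (hfJ : ∀ k : ℤ, J < |k| → f k = 0)
    (h0 : a 0 = (α : ℂ))
    (hsum : Summable fun k : ℤ => ‖a k‖ ^ 2)
    (hE : ∑' k : {k : ℤ // k ≠ 0}, ‖a (k : ℤ)‖ ^ 2 ≤ Etil)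
    (hbd : ∀ k : ℤ, k ≠ 0 → ‖a k‖ ≤ C₂ / |(k : ℝ)|) :
    ∀ k : ℤ, k ≠ 0 →
      ‖-Complex.I * ((k : ℂ) / 2) * ∑' k₁ : ℤ, a k₁ * a (k - k₁)‖ ≤
        C₂ * Real.sqrt (Etil + α ^ 2) * (Real.sqrt 2 + 1) * |(k : ℝ)| ^ ((1 : ℝ) / 2) ∧
      ‖(-Complex.I * ((k : ℂ) / 2) * (∑' k₁ : ℤ, a k₁ * a (k - k₁)) + f k) /
          ((ν * (k : ℝ) ^ 2 : ℝ) : ℂ)‖ ≤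
        ((C₂ * Real.sqrt (Etil + α ^ 2) * (Real.sqrt 2 + 1) +
            ⨆ j : {j : ℤ // j ≠ 0 ∧ |j| ≤ J}, ‖f (j : ℤ)‖ / Real.sqrt |((j : ℤ) : ℝ)|) / ν) /
          |(k : ℝ)| ^ ((3 : ℝ) / 2) := by
  intro k hk
  have henergy : ∑' j, ‖a j‖ ^ 2 ≤ Etil + α ^ 2 := by
    rw [hsum.tsum_eq_add_tsum_ne 0, h0, Complex.norm_real, Real.norm_eq_abs, sq_abs]
    linarith
  have hN := norm_neg_I_mul_half_mul_le hk (norm_tsum_mul_sub_le hsum henergy hbd hk)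
  refine ⟨hN, norm_div_ofReal_mul_sq_le hν (Int.cast_ne_zero.2 hk) ?_⟩
  rw [← Real.sqrt_eq_rpow] at hN
  rw [add_mul]
  exact (norm_add_le _ _).trans (add_le_add hN (norm_le_iSup_div_sqrt_mul_sqrt f hfJ hk))

theorem stmt_19 (ν α Etil C₂ : ℝ) (hν : 0 < ν) (hEt : 0 < Etil) (hC₂ : 0 < C₂)
    (J : ℤ) (hJ : 1 ≤ J)
    (f a : ℤ → ℂ) (hf0 : f 0 = 0) (hfJ : ∀ k : ℤ, J < |k| → f k = 0)
    (h0 : a 0 = (α : ℂ))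
    (hsum : Summable fun k : ℤ => ‖a k‖ ^ 2)
    (hE : ∑' k : {k : ℤ // k ≠ 0}, ‖a (k : ℤ)‖ ^ 2 ≤ Etil)
    (hbd : ∀ k : ℤ, k ≠ 0 → ‖a k‖ ≤ C₂ / |(k : ℝ)|) :
    ∀ k : ℤ, k ≠ 0 →
      ‖-Complex.I * ((k : ℂ) / 2) * ∑' k₁ : ℤ, a k₁ * a (k - k₁)‖ ≤
        C₂ * Real.sqrt (Etil + α ^ 2) * (Real.sqrt 2 + 1) * |(k : ℝ)| ^ ((1 : ℝ) / 2) ∧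
      ‖(-Complex.I * ((k : ℂ) / 2) * (∑' k₁ : ℤ, a k₁ * a (k - k₁)) + f k) /
          ((ν * (k : ℝ) ^ 2 : ℝ) : ℂ)‖ ≤
        ((C₂ * Real.sqrt (Etil + α ^ 2) * (Real.sqrt 2 + 1) +
            ⨆ j : {j : ℤ // j ≠ 0 ∧ |j| ≤ J}, ‖f (j : ℤ)‖ / Real.sqrt |((j : ℤ) : ℝ)|) / ν) /
          |(k : ℝ)| ^ ((3 : ℝ) / 2) :=
  stmt_19_general ν α Etil C₂ hν J f a hfJ h0 hsum hE hbd
end
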